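/- arXiv:1612.05761 — 3 statements merged into one kernel-verified Lean document; each statement's English description precedes it below -/
import Mathlib

section
/- Let ε > 0, χ ≥ 1 and λ > 0 satisfy √λ > ((1+2μ₁ε²)/χ)·(1 + μ₁(χ²+ε²)). Set p := 1 + 2μ₁ε² and δ := χ√λ/2. Then F_{p,δ}(0) < 0, and there exists y₀ > 0 such that F_{p,δ}(y₀) < 0. -/
open Real Set

/-- The function `F_{p,δ}` from the paper, depending on parameters `ε`, `lam` (the
voltage parameter `λ`), `δ` and `p`; here `μ₁ = π²/4`. -/
noncomputable def Fpd (ε lam δ p y : ℝ) : ℝ :=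
  π ^ 2 / 4 + (4 * δ * lam / (p * (lam * ε ^ 2 + 4 * δ ^ 2))) *
    (π ^ 2 / 4 * ε ^ 2 / p + p / (4 * δ) + (p * (π ^ 2 / 4) * ε ^ 2 / (p + 1)) * y
      - 1 / (1 + y))

/-! Write `μ₁ = π²/4`, `λ = s²`, `E = ε² + χ²`. For `δ = χ s / 2` the prefactor of the bracket is
`2χs / (pE)`, and since `μ₁ε² - p = -(p + 1)/2` for `p = 1 + 2μ₁ε²`,
`F_{p,δ}(0) = μ₁ + 1/E - χ s (p + 1) / (p² E)`. The hypothesis `χ s > p (1 + μ₁ E)` gives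
`χ s (p + 1) > p² (1 + μ₁ E)`, i.e. `F_{p,δ}(0) < 0`; as `F_{p,δ}` is continuous at `0`, it stays
negative at some `y₀ > 0`. -/

theorem continuousAt_Fpd {ε lam δ p y : ℝ} (hy : 1 + y ≠ 0) :
    ContinuousAt (Fpd ε lam δ p) y := by
  unfold Fpd
  fun_prop (disch := exact hy)

theorem Fpd_zero_eq {ε s χ p : ℝ} (hs : 0 < s) (hχ : 0 < χ) (hp : 0 < p) :
    Fpd ε (s ^ 2) (χ * s / 2) p 0 =
      π ^ 2 / 4 + 1 / (ε ^ 2 + χ ^ 2)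
        + 2 * χ * s * (π ^ 2 / 4 * ε ^ 2 - p) / (p ^ 2 * (ε ^ 2 + χ ^ 2)) := by
  have hE : 0 < ε ^ 2 + χ ^ 2 := by positivity
  unfold Fpd
  field_simp
  ring

theorem Fpd_zero_neg {ε s χ : ℝ} (hs : 0 < s) (hχ : 0 < χ)
    (hbig : (1 + 2 * (π ^ 2 / 4) * ε ^ 2) * (1 + π ^ 2 / 4 * (χ ^ 2 + ε ^ 2)) < χ * s) :
    Fpd ε (s ^ 2) (χ * s / 2) (1 + 2 * (π ^ 2 / 4) * ε ^ 2) 0 < 0 := by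
  set p := 1 + 2 * (π ^ 2 / 4) * ε ^ 2 with hp
  have hp0 : 0 < p := by positivity
  have hE : 0 < ε ^ 2 + χ ^ 2 := by positivity
  have hcoef : π ^ 2 / 4 * ε ^ 2 - p = -(p + 1) / 2 := by rw [hp]; ring
  have hkey : p ^ 2 * (1 + π ^ 2 / 4 * (ε ^ 2 + χ ^ 2)) < χ * s * (p + 1) := by
    rw [add_comm (ε ^ 2)]
    nlinarith [mul_lt_mul_of_pos_right hbig (by positivity : 0 < p + 1)]
  rw [Fpd_zero_eq hs hχ hp0, hcoef]
  have hform : π ^ 2 / 4 + 1 / (ε ^ 2 + χ ^ 2)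
        + 2 * χ * s * (-(p + 1) / 2) / (p ^ 2 * (ε ^ 2 + χ ^ 2))
      = (p ^ 2 * (1 + π ^ 2 / 4 * (ε ^ 2 + χ ^ 2)) - χ * s * (p + 1))
          / (p ^ 2 * (ε ^ 2 + χ ^ 2)) := by
    field_simp
    ring
  rw [hform]
  exact div_neg_of_neg_of_pos (by linarith) (by positivity)

theorem Fpd_neg_at_zero_and_pos_point_general (ε lam χ : ℝ) (hχ : 1 ≤ χ)
    (hlam : 0 < lam)
    (hbig : Real.sqrt lam >
      (1 + 2 * (π ^ 2 / 4) * ε ^ 2) / χ * (1 + (π ^ 2 / 4) * (χ ^ 2 + ε ^ 2)))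
    (p δ : ℝ) (hp : p = 1 + 2 * (π ^ 2 / 4) * ε ^ 2) (hδ : δ = χ * Real.sqrt lam / 2) :
    Fpd ε lam δ p 0 < 0 ∧ ∃ y₀ : ℝ, 0 < y₀ ∧ Fpd ε lam δ p y₀ < 0 := by
  have hχ0 : 0 < χ := one_pos.trans_le hχ
  obtain ⟨s, hs, rfl⟩ : ∃ s, 0 < s ∧ lam = s ^ 2 := ⟨√lam, sqrt_pos.2 hlam, (sq_sqrt hlam.le).symm⟩
  rw [sqrt_sq hs.le, gt_iff_lt, div_mul_eq_mul_div, div_lt_iff₀ hχ0, mul_comm s] at hbig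
  subst hp hδ
  rw [sqrt_sq hs.le]
  have hF0 := Fpd_zero_neg hs hχ0 hbig
  exact ⟨hF0, ((continuousAt_Fpd (by norm_num)).eventually_lt continuousAt_const hF0).exists_gt⟩

theorem Fpd_neg_at_zero_and_pos_point (ε lam χ : ℝ) (hε : 0 < ε) (hχ : 1 ≤ χ)
    (hlam : 0 < lam)
    (hbig : Real.sqrt lam >
      (1 + 2 * (π ^ 2 / 4) * ε ^ 2) / χ * (1 + (π ^ 2 / 4) * (χ ^ 2 + ε ^ 2)))
    (p δ : ℝ) (hp : p = 1 + 2 * (π ^ 2 / 4) * ε ^ 2) (hδ : δ = χ * Real.sqrt lam / 2) :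
    Fpd ε lam δ p 0 < 0 ∧ ∃ y₀ : ℝ, 0 < y₀ ∧ Fpd ε lam δ p y₀ < 0 :=
  Fpd_neg_at_zero_and_pos_point_general ε lam χ hχ hlam hbig p δ hp hδ
end

section
/- Let μ > 0 and C₀ > 0 be real numbers, and let F : (−1, ∞) → ℝ be a monotone increasing function such that F(y₀) < 0 for some y₀ > 0. Then there is no differentiable function E : [0, ∞) → ℝ satisfying simultaneously: E(t) > −1 for all t ≥ 0, E(t) ≤ C₀ e^{−μt} for all t ≥ 0, and E'(t) ≤ F(E(t)) for all t ≥ 0. -/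
open Real Set

theorem no_global_functional (μ C₀ : ℝ) (hμ : 0 < μ) (hC₀ : 0 < C₀)
    (F : ℝ → ℝ) (hF : MonotoneOn F (Set.Ioi (-1 : ℝ)))
    (y₀ : ℝ) (hy₀ : 0 < y₀) (hFy₀ : F y₀ < 0) :
    ¬ ∃ E : ℝ → ℝ, DifferentiableOn ℝ E (Set.Ici (0 : ℝ)) ∧
        (∀ t ∈ Set.Ici (0 : ℝ), -1 < E t) ∧
        (∀ t ∈ Set.Ici (0 : ℝ), E t ≤ C₀ * Real.exp (-μ * t)) ∧
        (∀ t ∈ Set.Ici (0 : ℝ), derivWithin E (Set.Ici (0 : ℝ)) t ≤ F (E t)) := by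
  rintro ⟨E, hdiff, hlb, hub, hode⟩
  set T : ℝ := max 0 (Real.log (C₀ / y₀) / μ) with hTdef
  have hT0 : (0 : ℝ) ≤ T := le_max_left _ _
  have hTlog : Real.log (C₀ / y₀) ≤ μ * T := by
    have := le_max_right 0 (Real.log (C₀ / y₀) / μ)
    calc Real.log (C₀ / y₀) = (Real.log (C₀ / y₀) / μ) * μ := by field_simp
    _ ≤ T * μ := by nlinarith
    _ = μ * T := mul_comm _ _
  have hexpT : C₀ * Real.exp (-μ * T) ≤ y₀ := by
    have h1 : Real.exp (-μ * T) ≤ y₀ / C₀ := by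
      rw [show y₀ / C₀ = Real.exp (Real.log (y₀ / C₀)) from
        (Real.exp_log (by positivity)).symm]
      apply Real.exp_le_exp.2
      have : Real.log (y₀ / C₀) = - Real.log (C₀ / y₀) := by
        rw [← Real.log_inv, inv_div]
      rw [this]; linarith
    calc C₀ * Real.exp (-μ * T) ≤ C₀ * (y₀ / C₀) := by nlinarith [Real.exp_pos (-μ * T)]
    _ = y₀ := by field_simp
  -- For t ≥ T, E t ≤ y₀
  have hEle : ∀ t, T ≤ t → E t ≤ y₀ := by
    intro t ht
    have ht0 : (0 : ℝ) ≤ t := le_trans hT0 ht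
    have := hub t ht0
    have hexp : Real.exp (-μ * t) ≤ Real.exp (-μ * T) := by
      apply Real.exp_le_exp.2; nlinarith
    nlinarith
  -- E is antitone at rate F y₀ on Ici T via g t = E t - F y₀ * t
  set g : ℝ → ℝ := fun t => E t - F y₀ * t with hg
  have hganti : AntitoneOn g (Set.Ici T) := by
    apply antitoneOn_of_deriv_nonpos (convex_Ici T)
    · apply ContinuousOn.sub
      · exact (hdiff.mono (Set.Ici_subset_Ici.2 hT0)).continuousOn
      · exact (continuous_const.mul continuous_id).continuousOn
    · rw [interior_Ici]
      intro x hx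
      have hx0 : (0 : ℝ) < x := lt_of_le_of_lt hT0 hx
      have hEx : DifferentiableAt ℝ E x :=
        hdiff.differentiableAt (Ici_mem_nhds hx0)
      exact (hEx.sub ((differentiable_id.const_mul (F y₀)) x)).differentiableWithinAt
    · rw [interior_Ici]
      intro x hx
      have hx0 : (0 : ℝ) < x := lt_of_le_of_lt hT0 hx
      have hnhds : Set.Ici (0 : ℝ) ∈ nhds x := Ici_mem_nhds hx0
      have hEx : DifferentiableAt ℝ E x := hdiff.differentiableAt hnhds
      have hg' : deriv g x = deriv E x - F y₀ := by
        have h2 : HasDerivAt (fun t : ℝ => F y₀ * t) (F y₀) x := by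
          simpa using (hasDerivAt_id x).const_mul (F y₀)
        exact (hEx.hasDerivAt.sub h2).deriv
      have hdw : derivWithin E (Set.Ici (0 : ℝ)) x = deriv E x :=
        derivWithin_of_mem_nhds hnhds
      have h1 : deriv E x ≤ F (E x) := by
        rw [← hdw]; exact hode x (le_of_lt hx0)
      have h2 : F (E x) ≤ F y₀ := by
        apply hF (hlb x (le_of_lt hx0)) (by simpa using by linarith : y₀ ∈ Set.Ioi (-1:ℝ))
        exact hEle x (le_of_lt hx)
      rw [hg']
      linarith
  -- Now take t large enough
  set t₁ : ℝ := T + (E T + 2) / (-(F y₀)) with ht₁def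
  have hET : -1 < E T := hlb T hT0
  have hFneg : 0 < -(F y₀) := by linarith
  have hfrac : 0 ≤ (E T + 2) / (-(F y₀)) := div_nonneg (by linarith) hFneg.le
  have ht₁T : T ≤ t₁ := by rw [ht₁def]; linarith
  have hkey : g t₁ ≤ g T := hganti (Set.self_mem_Ici) (by exact ht₁T) ht₁T
  have hgt : g t₁ = E t₁ - F y₀ * t₁ := rfl
  have hgT : g T = E T - F y₀ * T := rfl
  have hmul : -(F y₀) * ((E T + 2) / (-(F y₀))) = E T + 2 := by
    rw [mul_comm, div_mul_cancel₀ _ (ne_of_gt hFneg)]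
  have hEt₁ : E t₁ ≤ -2 := by
    have : E t₁ ≤ E T + F y₀ * (t₁ - T) := by
      rw [hgt, hgT] at hkey; linarith [hkey]
    have ht₁sub : t₁ - T = (E T + 2) / (-(F y₀)) := by rw [ht₁def]; ring
    rw [ht₁sub] at this
    nlinarith
  have := hlb t₁ (le_trans hT0 ht₁T)
  linarith
end

section
/- Let ε > 0, χ ≥ 1, C₀ > 0 and λ > 0 satisfy √λ > ((1+2μ₁ε²)/χ)·(1 + μ₁(χ²+ε²)). Set p := 1 + 2μ₁ε², δ := χ√λ/2 and α := λε²/(λε² + 4δ²). Then there is no differentiable function E : [0,∞) → ℝ satisfying simultaneously: E(t) > −1 for all t ≥ 0, E(t) ≤ C₀ e^{−μ₁ t} for all t ≥ 0, and E'(t) ≤ F_{p,δ}(E(t)) for all t ≥ 0. -/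
/-!
Above the threshold, `F_{p,δ}(0) < 0`; since `F_{p,δ}` is continuous at `0` and increasing on
`(-1, ∞)`, it stays below some `-c < 0` on `(-1, y₀]` for some `y₀ > 0`. The exponential bound
forces `E t ≤ y₀` for large `t`, so from then on `E' ≤ -c` and `E` decreases at least linearly,
eventually crossing the lower bound `-1`.
-/

open Real Set

open Filter Topology

theorem tendsto_atBot_of_eventually_deriv_le_neg {f : ℝ → ℝ} {c : ℝ} (hc : c < 0)
    (hf : ∀ᶠ t in atTop, DifferentiableAt ℝ f t ∧ deriv f t ≤ c) : Tendsto f atTop atBot := by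
  obtain ⟨T, hT⟩ := hf.exists_forall_of_atTop
  have hdiff : DifferentiableOn ℝ f (Ici T) := fun t ht => (hT t ht).1.differentiableWithinAt
  have hlinear : ∀ t ≥ T, f t ≤ f T + c * (t - T) := fun t ht => by
    have := (convex_Ici T).image_sub_le_mul_sub_of_deriv_le hdiff.continuousOn
      (hdiff.mono interior_subset) (fun x hx => (hT x (interior_subset hx)).2)
      T self_mem_Ici t ht ht
    linarith
  refine tendsto_atBot_mono' _ (eventually_atTop.2 ⟨T, hlinear⟩) ?_
  exact tendsto_atBot_add_const_left _ _ <|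
    (tendsto_atTop_add_const_right _ (-T) tendsto_id).const_mul_atTop_of_neg hc

theorem tendsto_const_mul_exp_neg_mul_atTop_nhds_zero (C : ℝ) {a : ℝ} (ha : 0 < a) :
    Tendsto (fun t => C * exp (-a * t)) atTop (𝓝 0) := by
  simpa using (tendsto_exp_atBot.comp
    (tendsto_id.const_mul_atTop_of_neg (neg_neg_of_pos ha))).const_mul C

theorem Fpd_eq_Fpd_zero_add (ε lam δ p y : ℝ) :
    Fpd ε lam δ p y = Fpd ε lam δ p 0 + 4 * δ * lam / (p * (lam * ε ^ 2 + 4 * δ ^ 2)) *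
      (p * (π ^ 2 / 4) * ε ^ 2 / (p + 1) * y + 1 - 1 / (1 + y)) := by
  simp only [Fpd]
  ring

theorem monotoneOn_Fpd {ε lam δ p : ℝ} (hlam : 0 < lam) (hδ : 0 < δ) (hp : 0 < p) :
    MonotoneOn (Fpd ε lam δ p) (Ioi (-1)) := by
  intro y (hy : -1 < y) z _ hyz
  have hinv : 1 / (1 + z) ≤ 1 / (1 + y) := one_div_le_one_div_of_le (by linarith) (by linarith)
  rw [Fpd_eq_Fpd_zero_add _ _ _ _ y, Fpd_eq_Fpd_zero_add _ _ _ _ z]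
  gcongr

theorem continuousAt_Fpd_zero (ε lam δ p : ℝ) : ContinuousAt (Fpd ε lam δ p) 0 := by
  unfold Fpd
  fun_prop (disch := norm_num)

theorem Fpd_zero_neg_s13 {ε χ lam p δ : ℝ} (hχ : 1 ≤ χ) (hlam : 0 < lam)
    (hbig : √lam > (1 + 2 * (π ^ 2 / 4) * ε ^ 2) / χ * (1 + π ^ 2 / 4 * (χ ^ 2 + ε ^ 2)))
    (hp : p = 1 + 2 * (π ^ 2 / 4) * ε ^ 2) (hδ : δ = χ * √lam / 2) :
    Fpd ε lam δ p 0 < 0 := by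
  set μ := π ^ 2 / 4
  have hμ : 0 < μ := by positivity
  have hs : 0 < √lam := sqrt_pos.2 hlam
  have hs2 : √lam ^ 2 = lam := sq_sqrt hlam.le
  set s := √lam
  have hχ0 : 0 < χ := by linarith
  have hp0 : 0 < p := by rw [hp]; positivity
  have hbig' : p * (1 + μ * (χ ^ 2 + ε ^ 2)) < χ * s := by
    rw [← hp, div_mul_eq_mul_div, gt_iff_lt, div_lt_iff₀ hχ0] at hbig
    linarith
  -- since `p < 2 (1 + μ ε²)`, the hypothesis dominates `p² (1 + μ (ε² + χ²))`
  have hkey : p ^ 2 * (1 + μ * (ε ^ 2 + χ ^ 2)) < 2 * χ * s * (1 + μ * ε ^ 2) := by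
    have : p < 2 * (1 + μ * ε ^ 2) := by rw [hp]; linarith
    nlinarith [mul_pos hχ0 hs]
  have hF0 : Fpd ε lam δ p 0 =
      (p ^ 2 * (1 + μ * (ε ^ 2 + χ ^ 2)) - 2 * χ * s * (1 + μ * ε ^ 2)) /
        (p ^ 2 * (ε ^ 2 + χ ^ 2)) := by
    rw [Fpd, hδ, ← hs2]
    field_simp
    rw [hp]
    ring
  rw [hF0]
  exact div_neg_of_neg_of_pos (by linarith) (by positivity)

theorem no_global_solution_functional_general (ε χ C₀ lam : ℝ) (hχ : 1 ≤ χ)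
    (hlam : 0 < lam)
    (hbig : Real.sqrt lam >
      (1 + 2 * (π ^ 2 / 4) * ε ^ 2) / χ * (1 + (π ^ 2 / 4) * (χ ^ 2 + ε ^ 2)))
    (p δ : ℝ) (hp : p = 1 + 2 * (π ^ 2 / 4) * ε ^ 2)
    (hδ : δ = χ * Real.sqrt lam / 2) :
    ¬ ∃ E : ℝ → ℝ, DifferentiableOn ℝ E (Set.Ici (0 : ℝ)) ∧
        (∀ t ∈ Set.Ici (0 : ℝ), -1 < E t) ∧
        (∀ t ∈ Set.Ici (0 : ℝ), E t ≤ C₀ * Real.exp (-(π ^ 2 / 4) * t)) ∧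
        (∀ t ∈ Set.Ici (0 : ℝ),
          derivWithin E (Set.Ici (0 : ℝ)) t ≤ Fpd ε lam δ p (E t)) := by
  rintro ⟨E, hdiff, hlow, hdec, hode⟩
  have hp0 : 0 < p := by rw [hp]; positivity
  have hδ0 : 0 < δ := by rw [hδ]; have := sqrt_pos.2 hlam; positivity
  obtain ⟨y₀, hFy₀, hy₀⟩ : ∃ y₀, Fpd ε lam δ p y₀ < 0 ∧ 0 < y₀ :=
    (((continuousAt_Fpd_zero ε lam δ p).continuousWithinAt (s := Ioi 0)).eventually
      (gt_mem_nhds (Fpd_zero_neg_s13 hχ hlam hbig hp hδ)) |>.and self_mem_nhdsWithin).exists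
  have hsmall : ∀ᶠ t in atTop, E t < y₀ := by
    have hbound := tendsto_const_mul_exp_neg_mul_atTop_nhds_zero C₀ (a := π ^ 2 / 4) (by positivity)
    filter_upwards [hbound.eventually (gt_mem_nhds hy₀), eventually_ge_atTop 0] with t hexp ht
    exact (hdec t ht).trans_lt hexp
  have hdrift : ∀ᶠ t in atTop, DifferentiableAt ℝ E t ∧ deriv E t ≤ Fpd ε lam δ p y₀ := by
    filter_upwards [hsmall, eventually_gt_atTop 0] with t hEt ht
    refine ⟨(hdiff t ht.le).differentiableAt (Ici_mem_nhds ht), ?_⟩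
    rw [← derivWithin_of_mem_nhds (Ici_mem_nhds ht)]
    have hy₀_mem : y₀ ∈ Ioi (-1) := by rw [mem_Ioi]; linarith
    exact (hode t ht.le).trans <| monotoneOn_Fpd hlam hδ0 hp0 (hlow t ht.le) hy₀_mem hEt.le
  obtain ⟨t, hEt, ht⟩ := (((tendsto_atBot_of_eventually_deriv_le_neg hFy₀ hdrift).eventually
    (eventually_lt_atBot (-1))).and (eventually_ge_atTop 0)).exists
  linarith [hlow t ht]

theorem no_global_solution_functional (ε χ C₀ lam : ℝ) (hε : 0 < ε) (hχ : 1 ≤ χ)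
    (hC₀ : 0 < C₀) (hlam : 0 < lam)
    (hbig : Real.sqrt lam >
      (1 + 2 * (π ^ 2 / 4) * ε ^ 2) / χ * (1 + (π ^ 2 / 4) * (χ ^ 2 + ε ^ 2)))
    (p δ α : ℝ) (hp : p = 1 + 2 * (π ^ 2 / 4) * ε ^ 2)
    (hδ : δ = χ * Real.sqrt lam / 2)
    (hα : α = lam * ε ^ 2 / (lam * ε ^ 2 + 4 * δ ^ 2)) :
    ¬ ∃ E : ℝ → ℝ, DifferentiableOn ℝ E (Set.Ici (0 : ℝ)) ∧
        (∀ t ∈ Set.Ici (0 : ℝ), -1 < E t) ∧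
        (∀ t ∈ Set.Ici (0 : ℝ), E t ≤ C₀ * Real.exp (-(π ^ 2 / 4) * t)) ∧
        (∀ t ∈ Set.Ici (0 : ℝ),
          derivWithin E (Set.Ici (0 : ℝ)) t ≤ Fpd ε lam δ p (E t)) :=
  no_global_solution_functional_general ε χ C₀ lam hχ hlam hbig p δ hp hδ
end
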